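/- arXiv:1905.12842 — 2 statements merged into one kernel-verified Lean document; each statement's English description precedes it below -/
import Mathlib

section
/- Suppose B ⪯ A₁ ⪯ A₂ are positive definite matrices. Then δ_∞(A₁, B) ≤ δ_∞(A₂, B). -/
open Matrix MeasureTheory ProbabilityTheory
open scoped Classical RealInnerProductSpace

/-- Operator (spectral) norm of a real matrix. -/
noncomputable def opNorm {m n : Type*} [Fintype m] [Fintype n] [DecidableEq n]
    (A : Matrix m n ℝ) : ℝ :=
  ‖LinearMap.toContinuousLinearMap (Matrix.toEuclideanLin A)‖

/-- Frobenius norm of a real matrix. -/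
noncomputable def frob {m n : Type*} [Fintype m] [Fintype n] (A : Matrix m n ℝ) : ℝ :=
  Real.sqrt (∑ i, ∑ j, (A i j) ^ 2)

/-- Positive semidefinite square root (junk value `0` off the PSD matrices). -/
noncomputable def sqrtPD {n : Type*} [Fintype n] [DecidableEq n]
    (A : Matrix n n ℝ) : Matrix n n ℝ :=
  if h : A.PosSemidef then
    (h.1.eigenvectorUnitary : Matrix n n ℝ) *
      Matrix.diagonal ((RCLike.ofReal : ℝ → ℝ) ∘ Real.sqrt ∘ h.1.eigenvalues) *
      (star h.1.eigenvectorUnitary : Matrix n n ℝ)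
  else 0

/-- Matrix logarithm of a hermitian matrix via the spectral theorem
(junk value `0` off the hermitian matrices). -/
noncomputable def mlog {n : Type*} [Fintype n] [DecidableEq n]
    (A : Matrix n n ℝ) : Matrix n n ℝ :=
  if h : A.IsHermitian then
    (h.eigenvectorUnitary : Matrix n n ℝ) * Matrix.diagonal (Real.log ∘ h.eigenvalues) *
      (star (h.eigenvectorUnitary : Matrix n n ℝ))
  else 0

/-- Thompson (invariant) metric `δ∞(A,B) = ‖log (A^{-1/2} B A^{-1/2})‖`. -/
noncomputable def thompson {n : Type*} [Fintype n] [DecidableEq n]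
    (A B : Matrix n n ℝ) : ℝ :=
  opNorm (mlog ((sqrtPD A)⁻¹ * B * (sqrtPD A)⁻¹))

/-- Largest (real) eigenvalue. -/
noncomputable def lamMax {n : Type*} [Fintype n] [DecidableEq n] (A : Matrix n n ℝ) : ℝ :=
  sSup (spectrum ℝ A)

/-- Smallest (real) eigenvalue. -/
noncomputable def lamMin {n : Type*} [Fintype n] [DecidableEq n] (A : Matrix n n ℝ) : ℝ :=
  sInf (spectrum ℝ A)

/-- Solution `P = Σ_{k≥0} (Lᵀ)^k M L^k` of the discrete Lyapunov equation `P = Lᵀ P L + M`. -/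
noncomputable def dlyap {n : Type*} [Fintype n] [DecidableEq n]
    (L M : Matrix n n ℝ) : Matrix n n ℝ :=
  ∑' k : ℕ, (L ^ k)ᵀ * M * (L ^ k)

/-- `K` stabilizes `(A,B)`: the closed loop matrix `A + BK` has spectral radius `< 1`. -/
def Stabilizes {n d : Type*} [Fintype n] [DecidableEq n] [Fintype d]
    (A : Matrix n n ℝ) (B : Matrix n d ℝ) (K : Matrix d n ℝ) : Prop :=
  ∀ z ∈ spectrum ℂ ((A + B * K).map ((↑) : ℝ → ℂ)), ‖z‖ < 1

/-!
For `B ⪯ A` the eigenvalues of `C = A^{-1/2} B A^{-1/2}` lie in `(0, 1]`, so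
`δ∞(A, B) = maxᵢ |log λᵢ(C)| = -log λ_min(C)`, and `δ∞(A, B) ≤ t` holds exactly when
`e^{-t} A ⪯ B`. Taking `t = δ∞(A₂, B)` gives `e^{-t} A₁ ⪯ e^{-t} A₂ ⪯ B`,
hence `δ∞(A₁, B) ≤ t`.
-/

open scoped MatrixOrder Matrix.Norms.L2Operator

lemma IsUnit.star_left_conjugate_le_conjugate_iff {R : Type*} [Ring R] [StarRing R]
    [PartialOrder R] [StarOrderedRing R] {u x y : R} (hu : IsUnit u) :
    star u * x * u ≤ star u * y * u ↔ x ≤ y := by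
  rw [← sub_nonneg, ← sub_mul, ← mul_sub, hu.star_left_conjugate_nonneg_iff, sub_nonneg]

lemma Real.abs_log_le_iff_exp_neg_le {x t : ℝ} (hx₀ : 0 < x) (hx₁ : x ≤ 1) :
    |Real.log x| ≤ t ↔ Real.exp (-t) ≤ x := by
  rw [abs_of_nonpos (Real.log_nonpos hx₀.le hx₁), neg_le, Real.le_log_iff_exp_le hx₀]

namespace Matrix

variable {n : Type*} [Fintype n] [DecidableEq n]

lemma IsHermitian.smul_one_le_iff {C : Matrix n n ℝ} (hC : C.IsHermitian) {μ : ℝ} :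
    μ • 1 ≤ C ↔ ∀ i, μ ≤ hC.eigenvalues i := by
  rw [← Algebra.algebraMap_eq_smul_one, algebraMap_le_iff_le_spectrum hC.isSelfAdjoint,
    hC.spectrum_real_eq_range_eigenvalues, Set.forall_mem_range]

lemma IsHermitian.le_smul_one_iff {C : Matrix n n ℝ} (hC : C.IsHermitian) {μ : ℝ} :
    C ≤ μ • 1 ↔ ∀ i, hC.eigenvalues i ≤ μ := by
  rw [← Algebra.algebraMap_eq_smul_one, le_algebraMap_iff_spectrum_le hC.isSelfAdjoint,
    hC.spectrum_real_eq_range_eigenvalues, Set.forall_mem_range]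

end Matrix

variable {n : Type*} [Fintype n] [DecidableEq n]

lemma sqrtPD_of_posSemidef {A : Matrix n n ℝ} (hA : A.PosSemidef) :
    sqrtPD A = Unitary.conjStarAlgAut ℝ _ hA.1.eigenvectorUnitary
      (diagonal (RCLike.ofReal ∘ Real.sqrt ∘ hA.1.eigenvalues)) :=
  dif_pos hA

lemma sqrtPD_mul_self {A : Matrix n n ℝ} (hA : A.PosSemidef) : sqrtPD A * sqrtPD A = A := by
  conv_rhs => rw [hA.1.spectral_theorem]
  rw [sqrtPD_of_posSemidef hA, ← map_mul, diagonal_mul_diagonal]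
  congr 2
  funext i
  simp [Real.mul_self_sqrt (hA.eigenvalues_nonneg i)]

lemma isHermitian_sqrtPD (A : Matrix n n ℝ) : (sqrtPD A).IsHermitian := by
  by_cases hA : A.PosSemidef
  · rw [sqrtPD_of_posSemidef hA]
    exact (isHermitian_diagonal (n := n) (α := ℝ) _).isSelfAdjoint.map
      (Unitary.conjStarAlgAut ℝ _ _)
  · simp [sqrtPD, hA]

lemma isUnit_sqrtPD {A : Matrix n n ℝ} (hA : A.PosDef) : IsUnit (sqrtPD A) :=
  isUnit_of_mul_isUnit_left (sqrtPD_mul_self hA.posSemidef ▸ hA.isUnit)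

lemma sqrtPD_inv_mul_mul_sqrtPD_inv {A : Matrix n n ℝ} (hA : A.PosDef) :
    (sqrtPD A)⁻¹ * A * (sqrtPD A)⁻¹ = 1 := by
  have hS := (sqrtPD A).isUnit_iff_isUnit_det.1 (isUnit_sqrtPD hA)
  nth_rw 2 [← sqrtPD_mul_self hA.posSemidef]
  rw [← mul_assoc, nonsing_inv_mul _ hS, one_mul, mul_nonsing_inv _ hS]

lemma thompson_eq_norm_diagonal {A B : Matrix n n ℝ}
    (hC : ((sqrtPD A)⁻¹ * B * (sqrtPD A)⁻¹).IsHermitian) :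
    thompson A B = ‖(diagonal (Real.log ∘ hC.eigenvalues) : Matrix n n ℝ)‖ := by
  change ‖mlog ((sqrtPD A)⁻¹ * B * (sqrtPD A)⁻¹)‖ = _
  rw [mlog, dif_pos hC, ← Unitary.coe_star, mul_assoc, CStarRing.norm_coe_unitary_mul,
    CStarRing.norm_mul_coe_unitary]

lemma smul_le_iff_smul_one_le_sqrtPD_inv_conj {A B : Matrix n n ℝ} (hA : A.PosDef) (μ : ℝ) :
    μ • A ≤ B ↔ μ • 1 ≤ (sqrtPD A)⁻¹ * B * (sqrtPD A)⁻¹ := by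
  have hS : IsUnit (sqrtPD A)⁻¹ := isUnit_nonsing_inv_iff.2 (isUnit_sqrtPD hA)
  rw [← hS.star_left_conjugate_le_conjugate_iff (x := μ • A) (y := B),
    (isHermitian_sqrtPD A).inv.star_eq, mul_smul_comm, smul_mul_assoc,
    sqrtPD_inv_mul_mul_sqrtPD_inv hA]

lemma thompson_nonneg (A B : Matrix n n ℝ) : 0 ≤ thompson A B := norm_nonneg _

lemma thompson_le_iff {A B : Matrix n n ℝ} (hA : A.PosDef) (hB : B.PosDef) (hBA : B ≤ A)
    {t : ℝ} (ht : 0 ≤ t) : thompson A B ≤ t ↔ Real.exp (-t) • A ≤ B := by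
  set S := (sqrtPD A)⁻¹
  have hS : IsSelfAdjoint S := (isHermitian_sqrtPD A).inv
  have hSu : IsUnit S := isUnit_nonsing_inv_iff.2 (isUnit_sqrtPD hA)
  have hC : (S * B * S).PosDef := by
    simpa only [hS.star_eq] using (Matrix.IsUnit.posDef_star_left_conjugate_iff hSu).2 hB
  have hC_le_one : ∀ i, hC.1.eigenvalues i ≤ 1 := by
    rw [← hC.1.le_smul_one_iff, one_smul, ← sqrtPD_inv_mul_mul_sqrtPD_inv hA]
    exact hS.conjugate_le_conjugate hBA
  rw [thompson_eq_norm_diagonal hC.1, l2_opNorm_diagonal, pi_norm_le_iff_of_nonneg ht,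
    smul_le_iff_smul_one_le_sqrtPD_inv_conj hA, hC.1.smul_one_le_iff]
  exact forall_congr' fun i => Real.abs_log_le_iff_exp_neg_le (hC.eigenvalues_pos i) (hC_le_one i)

/-- Monotonicity of the Thompson metric along the Loewner order. -/
theorem thompson_mono {n : ℕ} (A₁ A₂ B : Matrix (Fin n) (Fin n) ℝ)
    (hB : B.PosDef) (hA₁ : A₁.PosDef) (hA₂ : A₂.PosDef)
    (h₁ : (A₁ - B).PosSemidef) (h₂ : (A₂ - A₁).PosSemidef) :
    thompson A₁ B ≤ thompson A₂ B := by
  have hBA₁ : B ≤ A₁ := h₁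
  have hA₁A₂ : A₁ ≤ A₂ := h₂
  set t := thompson A₂ B
  have hlower : Real.exp (-t) • A₂ ≤ B :=
    (thompson_le_iff hA₂ hB (hBA₁.trans hA₁A₂) (thompson_nonneg A₂ B)).1 le_rfl
  refine (thompson_le_iff hA₁ hB hBA₁ (thompson_nonneg A₂ B)).2 (le_trans ?_ hlower)
  exact smul_le_smul_of_nonneg_left hA₁A₂ (Real.exp_pos _).le
end

section
/- Suppose K₀ stabilizes (A,B) with ‖(A+BK₀)^k‖ ≤ τρ^k for all k ≥ 0, where τ ≥ 1 and ρ ∈ (0,1). If K satisfies ‖K − K₀‖ ≤ (1−ρ)/(2τ‖B‖), then ‖(A+BK)^k‖ ≤ τ((1+ρ)/2)^k for all k ≥ 0; in particular K stabilizes (A,B). -/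
/-!
Write `A + BK = X + Y` with `X = A + BK₀` and `Y = B(K - K₀)`. If `‖X ^ k‖ ≤ τ ρ ^ k`, then
`‖X ^ j (X + Y) ^ k‖ ≤ τ ρ ^ j (ρ + τ‖Y‖) ^ k` by induction on `k` for all `j` simultaneously, using
`X ^ j (X + Y) ^ (k + 1) = X ^ (j + 1) (X + Y) ^ k + X ^ j Y (X + Y) ^ k`; the hypothesis on `K`
makes `ρ + τ‖Y‖ ≤ (1 + ρ) / 2`. Stability follows because `z ∈ σ(M)` gives `z ^ k ∈ σ(M ^ k)`, so
`|z| ^ k` is bounded by a multiple of `‖M ^ k‖`, which decays geometrically.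
-/

open Matrix MeasureTheory ProbabilityTheory
open scoped Classical RealInnerProductSpace

open Filter Topology
open scoped Matrix.Norms.L2Operator

lemma opNorm_eq_l2_opNorm {m n : Type*} [Fintype m] [Fintype n] [DecidableEq n]
    (A : Matrix m n ℝ) : opNorm A = ‖A‖ := rfl

section PowerBounds

variable {R : Type*} [NormedRing R] {X Y : R} {τ ρ : ℝ}

theorem norm_pow_mul_add_pow_le (hX : ∀ k : ℕ, ‖X ^ k‖ ≤ τ * ρ ^ k) (k j : ℕ) :
    ‖X ^ j * (X + Y) ^ k‖ ≤ τ * ρ ^ j * (ρ + τ * ‖Y‖) ^ k := by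
  induction k generalizing j with
  | zero => simpa using hX j
  | succ k ih =>
    have hτρ : 0 ≤ τ * ρ ^ j := (norm_nonneg _).trans (hX j)
    have hXY : ‖(X + Y) ^ k‖ ≤ τ * (ρ + τ * ‖Y‖) ^ k := by simpa using ih 0
    calc ‖X ^ j * (X + Y) ^ (k + 1)‖
        = ‖X ^ (j + 1) * (X + Y) ^ k + X ^ j * Y * (X + Y) ^ k‖ := by
          rw [pow_succ' (X + Y), pow_succ, ← mul_assoc, mul_add, add_mul, mul_assoc]
      _ ≤ ‖X ^ (j + 1) * (X + Y) ^ k‖ + ‖X ^ j‖ * ‖Y‖ * ‖(X + Y) ^ k‖ :=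
          norm_add_le_of_le le_rfl (norm_mul₃_le ..)
      _ ≤ τ * ρ ^ (j + 1) * (ρ + τ * ‖Y‖) ^ k + τ * ρ ^ j * ‖Y‖ * (τ * (ρ + τ * ‖Y‖) ^ k) := by
          gcongr
          exacts [ih (j + 1), hX j]
      _ = τ * ρ ^ j * (ρ + τ * ‖Y‖) ^ (k + 1) := by ring

theorem norm_add_pow_le (hX : ∀ k : ℕ, ‖X ^ k‖ ≤ τ * ρ ^ k) (k : ℕ) :
    ‖(X + Y) ^ k‖ ≤ τ * (ρ + τ * ‖Y‖) ^ k := by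
  simpa using norm_pow_mul_add_pow_le hX k 0

end PowerBounds

theorem spectrum.norm_lt_one_of_norm_pow_le {𝕜 A : Type*} [NormedField 𝕜] [NormedRing A]
    [NormedAlgebra 𝕜 A] [CompleteSpace A] {a : A} {C r : ℝ} (hr₀ : 0 ≤ r) (hr₁ : r < 1)
    (ha : ∀ k : ℕ, ‖a ^ k‖ ≤ C * r ^ k) {z : 𝕜} (hz : z ∈ spectrum 𝕜 a) : ‖z‖ < 1 := by
  have hdecay : Tendsto (fun k : ℕ => C * r ^ k * ‖(1 : A)‖) atTop (𝓝 0) := by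
    simpa using ((tendsto_pow_atTop_nhds_zero_of_lt_one hr₀ hr₁).const_mul C).mul_const ‖(1 : A)‖
  obtain ⟨k, hk⟩ := (hdecay.eventually (gt_mem_nhds one_pos)).exists
  by_contra! hz₁
  have := calc
    1 ≤ ‖z‖ ^ k := one_le_pow₀ hz₁
    _ = ‖z ^ k‖ := (norm_pow z k).symm
    _ ≤ ‖a ^ k‖ * ‖(1 : A)‖ := spectrum.norm_le_norm_mul_of_mem (spectrum.pow_mem_pow a k hz)
    _ ≤ C * r ^ k * ‖(1 : A)‖ := by gcongr; exact ha k
  linarith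

theorem Matrix.norm_lt_one_of_mem_spectrum_map_ofReal {n : Type*} [Fintype n] [DecidableEq n]
    {M : Matrix n n ℝ} {C r : ℝ} (hr₀ : 0 ≤ r) (hr₁ : r < 1) (hM : ∀ k : ℕ, ‖M ^ k‖ ≤ C * r ^ k)
    {z : ℂ} (hz : z ∈ spectrum ℂ (M.map ((↑) : ℝ → ℂ))) : ‖z‖ < 1 := by
  -- bounded because its domain is finite-dimensional; this compares the two `L²` operator norms
  let f : Matrix n n ℝ →L[ℝ] Matrix n n ℂ :=
    LinearMap.toContinuousLinearMap (Complex.ofRealCLM : ℝ →ₗ[ℝ] ℂ).mapMatrix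
  refine spectrum.norm_lt_one_of_norm_pow_le hr₀ hr₁ (C := ‖f‖ * C) (fun k => ?_) hz
  calc ‖M.map ((↑) : ℝ → ℂ) ^ k‖ = ‖f (M ^ k)‖ := by
        change ‖Complex.ofRealHom.mapMatrix M ^ k‖ = _
        rw [← map_pow]; rfl
    _ ≤ ‖f‖ * ‖M ^ k‖ := f.le_opNorm _
    _ ≤ ‖f‖ * C * r ^ k := by rw [mul_assoc]; gcongr; exact hM k

theorem robust_control_general {n d : ℕ}
    (A : Matrix (Fin n) (Fin n) ℝ) (B : Matrix (Fin n) (Fin d) ℝ)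
    (K K₀ : Matrix (Fin d) (Fin n) ℝ) (τ ρ : ℝ)
    (hρ : ρ ∈ Set.Ioo (0 : ℝ) 1)
    (hK₀ : ∀ k : ℕ, opNorm ((A + B * K₀) ^ k) ≤ τ * ρ ^ k)
    (hKK₀ : opNorm (K - K₀) ≤ (1 - ρ) / (2 * τ * opNorm B)) :
    (∀ k : ℕ, opNorm ((A + B * K) ^ k) ≤ τ * ((1 + ρ) / 2) ^ k) ∧ Stabilizes A B K := by
  simp only [opNorm_eq_l2_opNorm] at hK₀ hKK₀ ⊢
  obtain ⟨hρ₀, hρ₁⟩ := hρ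
  have hτ₀ : 0 ≤ τ := by simpa using (norm_nonneg _).trans (hK₀ 0)
  have hgap : τ * ‖B * (K - K₀)‖ ≤ (1 - ρ) / 2 := calc
    τ * ‖B * (K - K₀)‖ ≤ τ * ‖B‖ * ‖K - K₀‖ := by
      rw [mul_assoc]; gcongr; exact Matrix.l2_opNorm_mul _ _
    _ ≤ τ * ‖B‖ * ((1 - ρ) / (2 * τ * ‖B‖)) := by gcongr
    _ ≤ (1 - ρ) / 2 := by
      rcases (mul_nonneg hτ₀ (norm_nonneg B)).eq_or_lt with h | h
      · rw [← h, zero_mul]; linarith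
      · rw [mul_assoc 2, ← div_div, mul_div_cancel₀ _ h.ne']
  have hdecay (k : ℕ) : ‖(A + B * K) ^ k‖ ≤ τ * ((1 + ρ) / 2) ^ k := calc
    ‖(A + B * K) ^ k‖ = ‖(A + B * K₀ + B * (K - K₀)) ^ k‖ := by
      rw [Matrix.mul_sub, add_add_sub_cancel]
    _ ≤ τ * (ρ + τ * ‖B * (K - K₀)‖) ^ k := norm_add_pow_le hK₀ k
    _ ≤ τ * ((1 + ρ) / 2) ^ k := by gcongr; linarith
  exact ⟨hdecay, fun z hz => Matrix.norm_lt_one_of_mem_spectrum_map_ofReal (by linarith)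
    (by linarith) hdecay hz⟩

/-- Robustness of exponential stability to perturbation of the feedback. -/
theorem robust_control {n d : ℕ}
    (A : Matrix (Fin n) (Fin n) ℝ) (B : Matrix (Fin n) (Fin d) ℝ)
    (K K₀ : Matrix (Fin d) (Fin n) ℝ) (τ ρ : ℝ)
    (hτ : 1 ≤ τ) (hρ : ρ ∈ Set.Ioo (0 : ℝ) 1)
    (hK₀ : ∀ k : ℕ, opNorm ((A + B * K₀) ^ k) ≤ τ * ρ ^ k)
    (hKK₀ : opNorm (K - K₀) ≤ (1 - ρ) / (2 * τ * opNorm B)) :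
    (∀ k : ℕ, opNorm ((A + B * K) ^ k) ≤ τ * ((1 + ρ) / 2) ^ k) ∧ Stabilizes A B K :=
  robust_control_general A B K K₀ τ ρ hρ hK₀ hKK₀
end
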